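/- Let X₁, …, X_d be independent real random variables with X_j ∈ 𝓛¹_{α_j} (i.e., P(|X_j| > x) = x^{−α_j}·ℓ_j(x) with ℓ_j slowly varying). Let g : ℝᵈ → ℝ be globally Lipschitz and suppose there exist an index j*, constants R > 0, c > 0 and r₀ such that |g(x)| ≥ c|x_{j*}| whenever max_{k ≠ j*}|x_k| ≤ R and |x_{j*}| ≥ r₀. Then limsup_{t→∞} (−log P(|g(X)| > t))/(log t) ≤ α_{j*}. -/

import Mathlib

/-!
Choose `M` so large that each coordinate satisfies `|X_k| ≤ M` with positive probability. On the
event `{|X_{j*}| > s} ∩ ⋂_{k ≠ j*} {|X_k| ≤ M}`, comparing `g(X)` with `g` at the point that keeps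
only the `j*`-coordinate gives `|g(X)| > c s - C` with `C = L d M`, so by independence
`P(|g(X)| > c s - C) ≥ Q · P(|X_{j*}| > s)` with `Q > 0`. For `β > α_{j*}`, slow variation gives
`P(|X_{j*}| > 2x) ≥ 2^{-β} P(|X_{j*}| > x)` for large `x`, and iterating this doubling bound yields
`P(|X_{j*}| > s) ≥ K s^{-β}`. Hence `P(|g(X)| > t) ≥ K' t^{-β}` for large `t`, i.e. the limsup is
at most `β`.
-/

open Filter MeasureTheory Real

/-- A function is slowly varying at infinity if `ℓ (c*x) / ℓ x → 1` for every `c > 0`. -/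
def SlowlyVarying (ℓ : ℝ → ℝ) : Prop :=
  ∀ c : ℝ, 0 < c → Tendsto (fun x => ℓ (c * x) / ℓ x) atTop (nhds 1)

open Finset

namespace SlowlyVarying

variable {ℓ : ℝ → ℝ}

theorem eventually_ne_zero (hℓ : SlowlyVarying ℓ) : ∀ᶠ x in atTop, ℓ x ≠ 0 := by
  have h := hℓ 1 one_pos
  simp only [one_mul] at h
  filter_upwards [h.eventually_ne one_ne_zero] with x hx h0
  simp [h0] at hx

theorem tendsto_rpow_mul_div (hℓ : SlowlyVarying ℓ) (α : ℝ) {c : ℝ} (hc : 0 < c) :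
    Tendsto (fun x => (c * x) ^ (-α) * ℓ (c * x) / (x ^ (-α) * ℓ x)) atTop (nhds (c ^ (-α))) := by
  have h := (hℓ c hc).const_mul (c ^ (-α))
  rw [mul_one] at h
  refine h.congr' ?_
  filter_upwards [eventually_gt_atTop 0] with x hx
  rw [mul_div_mul_comm, mul_rpow hc.le hx.le, mul_div_assoc, div_self (rpow_pos_of_pos hx _).ne',
    mul_one]

end SlowlyVarying

section RegularVariation

variable {p ℓ : ℝ → ℝ} {α : ℝ}

theorem pos_of_antitone_of_slowlyVarying (hp : Antitone p) (hp0 : ∀ x, 0 ≤ p x)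
    (hform : ∀ x, 0 < x → p x = x ^ (-α) * ℓ x) (hℓ : SlowlyVarying ℓ) {x : ℝ} (hx : 0 < x) :
    0 < p x := by
  obtain ⟨y, hℓy, hxy⟩ := (hℓ.eventually_ne_zero.and (eventually_ge_atTop x)).exists
  have hy : 0 < y := hx.trans_le hxy
  have hpy : p y ≠ 0 := by
    rw [hform y hy]
    exact mul_ne_zero (rpow_pos_of_pos hy _).ne' hℓy
  exact ((hp0 y).lt_of_ne' hpy).trans_le (hp hxy)

theorem eventually_two_rpow_mul_le (hpos : ∀ᶠ x in atTop, 0 < p x)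
    (hform : ∀ᶠ x in atTop, p x = x ^ (-α) * ℓ x) (hℓ : SlowlyVarying ℓ) {β : ℝ} (hαβ : α < β) :
    ∀ᶠ x in atTop, (2 : ℝ) ^ (-β) * p x ≤ p (2 * x) := by
  have hratio : Tendsto (fun x => p (2 * x) / p x) atTop (nhds ((2 : ℝ) ^ (-α))) := by
    refine (hℓ.tendsto_rpow_mul_div α two_pos).congr' ?_
    filter_upwards [hform, (tendsto_id.const_mul_atTop two_pos).eventually hform] with x hx h2x
    simp only [id] at h2x
    rw [hx, h2x]
  have hlt : (2 : ℝ) ^ (-β) < 2 ^ (-α) := rpow_lt_rpow_of_exponent_lt one_lt_two (by linarith)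
  filter_upwards [hpos, hratio.eventually_const_le hlt] with x hx hle
  exact (le_div_iff₀ hx).1 hle

theorem exists_rpow_le_of_doubling (hp : Antitone p) (hpos : ∀ᶠ x in atTop, 0 < p x) {β : ℝ}
    (hβ : 0 ≤ β) (hdbl : ∀ᶠ x in atTop, (2 : ℝ) ^ (-β) * p x ≤ p (2 * x)) :
    ∃ K > 0, ∀ᶠ s in atTop, K * s ^ (-β) ≤ p s := by
  obtain ⟨x₀, hx₀⟩ := (hpos.and (hdbl.and (eventually_gt_atTop 0))).exists_forall_of_atTop
  obtain ⟨hpx₀, -, hx₀0⟩ := hx₀ x₀ le_rfl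
  set K := (2 : ℝ) ^ (-β) * p x₀ * x₀ ^ β
  have hK : 0 < K := by positivity
  have hbound : ∀ n : ℕ, ∀ s, x₀ ≤ s → s ≤ 2 ^ (n + 1) * x₀ → K * s ^ (-β) ≤ p s := by
    intro n
    induction n with
    | zero =>
      intro s hs hs'
      calc K * s ^ (-β) ≤ K * x₀ ^ (-β) :=
            mul_le_mul_of_nonneg_left (rpow_le_rpow_of_nonpos hx₀0 hs (by linarith)) hK.le
        _ = 2 ^ (-β) * p x₀ := by
            simp only [K, rpow_neg hx₀0.le]; field_simp
        _ ≤ p (2 * x₀) := (hx₀ x₀ le_rfl).2.1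
        _ ≤ p s := hp (by simpa using hs')
    | succ n ih =>
      intro s hs hs'
      rcases le_or_gt s (2 ^ (n + 1) * x₀) with hsn | hsn
      · exact ih s hs hsn
      have hhalf : x₀ ≤ s / 2 := by
        rw [le_div_iff₀ two_pos]
        calc x₀ * 2 ≤ 2 ^ (n + 1) * x₀ := by
              rw [mul_comm]; gcongr; exact le_self_pow₀ one_le_two (by omega)
          _ ≤ s := hsn.le
      have hs0 : 0 < s := by linarith
      calc K * s ^ (-β) = 2 ^ (-β) * (K * (s / 2) ^ (-β)) := by
            rw [div_rpow hs0.le zero_le_two]; field_simp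
        _ ≤ 2 ^ (-β) * p (s / 2) := by
            gcongr
            refine ih _ hhalf ?_
            rw [div_le_iff₀ two_pos]; rw [pow_succ] at hs'; linarith
        _ ≤ p (2 * (s / 2)) := (hx₀ _ hhalf).2.1
        _ = p s := by ring_nf
  refine ⟨K, hK, ?_⟩
  filter_upwards [eventually_ge_atTop x₀] with s hs
  obtain ⟨n, hn⟩ := pow_unbounded_of_one_lt (s / x₀) one_lt_two
  refine hbound n s hs ?_
  rw [div_lt_iff₀ hx₀0] at hn
  exact hn.le.trans (mul_le_mul_of_nonneg_right (pow_le_pow_right₀ one_le_two n.le_succ) hx₀0.le)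

end RegularVariation

theorem limsup_neg_log_div_log_le {f : ℝ → ℝ} {α : ℝ} (hf : ∀ᶠ t in atTop, f t ≤ 1)
    (hlb : ∀ β > α, ∃ K > 0, ∀ᶠ t in atTop, K * t ^ (-β) ≤ f t) :
    limsup (fun t => -log (f t) / log t) atTop ≤ α := by
  have hbdd : IsCoboundedUnder (· ≤ ·) atTop (fun t => -log (f t) / log t) := by
    obtain ⟨K, hK, hKf⟩ := hlb (α + 1) (by linarith)
    refine IsBoundedUnder.isCoboundedUnder_le ⟨0, eventually_map.2 ?_⟩
    filter_upwards [hf, hKf, eventually_gt_atTop (1 : ℝ)] with t h1 hKt ht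
    have hft : 0 < f t := lt_of_lt_of_le (by positivity) hKt
    exact div_nonneg (neg_nonneg.2 (log_nonpos hft.le h1)) (log_pos ht).le
  refine le_of_forall_gt_imp_ge_of_dense fun b hb => limsup_le_of_le hbdd ?_
  obtain ⟨K, hK, hKf⟩ := hlb ((α + b) / 2) (by linarith)
  have hsmall : Tendsto (fun t => -log K / log t) atTop (nhds 0) :=
    tendsto_const_nhds.div_atTop tendsto_log_atTop
  filter_upwards [hKf, eventually_gt_atTop 1,
    hsmall.eventually_le_const (by linarith : (0 : ℝ) < (b - α) / 2)] with t hKt ht hsmallt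
  have hlogt : 0 < log t := log_pos ht
  have ht0 : 0 < t := by linarith
  have hlog : log K - (α + b) / 2 * log t ≤ log (f t) := by
    have h := log_le_log (by positivity) hKt
    rwa [log_mul hK.ne' (rpow_pos_of_pos ht0 _).ne', log_rpow ht0, neg_mul, ← sub_eq_add_neg] at h
  calc -log (f t) / log t ≤ (-log K + (α + b) / 2 * log t) / log t := by
        gcongr; linarith
    _ = -log K / log t + (α + b) / 2 := by field_simp
    _ ≤ b := by linarith

theorem exists_rpow_le_of_le_comp_affine {f h : ℝ → ℝ} {K β c C : ℝ} (hK : 0 < K) (hβ : 0 ≤ β)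
    (hc : 0 < c) (hh : ∀ᶠ s in atTop, K * s ^ (-β) ≤ h s)
    (hhf : ∀ᶠ s in atTop, h s ≤ f (c * s - C)) :
    ∃ K' > 0, ∀ᶠ t in atTop, K' * t ^ (-β) ≤ f t := by
  refine ⟨K * (2 / c) ^ (-β), by positivity, ?_⟩
  have hs : Tendsto (fun t => (t + C) / c) atTop atTop :=
    (tendsto_atTop_add_const_right _ C tendsto_id).atTop_div_const hc
  filter_upwards [hs.eventually (hh.and hhf), eventually_gt_atTop |C|] with t ⟨hKh, hhf⟩ ht
  have hs0 : 0 < (t + C) / c := div_pos (by linarith [neg_abs_le C]) hc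
  have hs2t : (t + C) / c ≤ 2 / c * t := by
    rw [div_mul_eq_mul_div]; gcongr; linarith [le_abs_self C]
  calc K * (2 / c) ^ (-β) * t ^ (-β) = K * (2 / c * t) ^ (-β) := by
        rw [mul_rpow (by positivity) (by linarith [abs_nonneg C]), mul_assoc]
    _ ≤ K * ((t + C) / c) ^ (-β) :=
        mul_le_mul_of_nonneg_left (rpow_le_rpow_of_nonpos hs0 hs2t (by linarith)) hK.le
    _ ≤ h ((t + C) / c) := hKh
    _ ≤ f (c * ((t + C) / c) - C) := hhf
    _ = f t := by congr 1; field_simp; ring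

theorem lt_abs_apply_of_dominant_coord {ι : Type*} [Fintype ι] [DecidableEq ι] {g : (ι → ℝ) → ℝ}
    {L : ℝ} (hL : 0 ≤ L) (hg : ∀ x y : ι → ℝ, |g x - g y| ≤ L * ∑ k, |x k - y k|)
    {j : ι} {R c r₀ : ℝ} (hR : 0 ≤ R) (hc : 0 < c)
    (hinfl : ∀ x : ι → ℝ, (∀ k, k ≠ j → |x k| ≤ R) → r₀ ≤ |x j| → c * |x j| ≤ |g x|)
    {M s : ℝ} (hM : 0 ≤ M) (hs : r₀ ≤ s) {x : ι → ℝ} (hxj : s < |x j|)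
    (hx : ∀ k, k ≠ j → |x k| ≤ M) :
    c * s - L * Fintype.card ι * M < |g x| := by
  set y : ι → ℝ := Pi.single j (x j)
  have hyj : y j = x j := by simp [y]
  have hy : ∀ k, k ≠ j → y k = 0 := fun k hk => by simp [y, hk]
  have hgy : c * |x j| ≤ |g y| := by
    rw [← hyj]
    refine hinfl y (fun k hk => ?_) ?_
    · simpa [hy k hk] using hR
    · simpa [hyj] using hs.trans hxj.le
  have hdist : |g x - g y| ≤ L * Fintype.card ι * M := by
    refine (hg x y).trans ?_
    rw [mul_assoc]
    refine mul_le_mul_of_nonneg_left ?_ hL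
    calc ∑ k, |x k - y k| ≤ ∑ _k : ι, M := by
          refine sum_le_sum fun k _ => ?_
          rcases eq_or_ne k j with rfl | hk
          · simpa [hyj] using hM
          · simpa [hy k hk] using hx k hk
      _ = Fintype.card ι * M := by simp
  have hgxy := abs_sub_abs_le_abs_sub (g y) (g x)
  rw [abs_sub_comm] at hgxy
  linarith [mul_lt_mul_of_pos_left hxj hc]

section Probability

variable {Ω : Type*} [MeasurableSpace Ω] {μ : Measure Ω}

theorem eventually_measure_abs_le_pos [NeZero μ] (f : Ω → ℝ) :
    ∀ᶠ M in atTop, 0 < μ {ω | |f ω| ≤ M} := by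
  have hmono : Monotone fun M : ℝ => {ω | |f ω| ≤ M} := fun a b hab ω hω => le_trans hω hab
  have hunion : (⋃ M : ℝ, {ω | |f ω| ≤ M}) = Set.univ :=
    Set.eq_univ_of_forall fun ω => Set.mem_iUnion.2 ⟨|f ω|, show |f ω| ≤ |f ω| from le_rfl⟩
  have h := tendsto_measure_iUnion_atTop (μ := μ) hmono
  rw [hunion] at h
  exact h.eventually_const_lt (Measure.measure_univ_pos.2 (NeZero.ne μ))

theorem ProbabilityTheory.iIndepFun.measure_iInter_preimage_update {ι β : Type*} [Fintype ι]
    [DecidableEq ι] [MeasurableSpace β] {X : ι → Ω → β} (hX : ProbabilityTheory.iIndepFun X μ)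
    {B : ι → Set β} (hB : ∀ k, MeasurableSet (B k)) {A : Set β} (hA : MeasurableSet A) (j : ι) :
    μ (⋂ k, X k ⁻¹' Function.update B j A k)
      = μ (X j ⁻¹' A) * ∏ k ∈ univ \ {j}, μ (X k ⁻¹' B k) := by
  have hBA : ∀ k, MeasurableSet (Function.update B j A k) := fun k => by
    rcases eq_or_ne k j with rfl | hk
    · simpa using hA
    · simpa [hk] using hB k
  rw [hX.meas_iInter fun k => ⟨_, hBA k, rfl⟩, ← prod_update_of_mem (mem_univ j)]
  exact prod_congr rfl fun k _ => by rcases eq_or_ne k j with rfl | hk <;> simp [*]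

theorem tail_mul_prod_le_measure_abs_gt [IsFiniteMeasure μ] {ι : Type*} [Fintype ι]
    [DecidableEq ι] {X : ι → Ω → ℝ} (hX : ProbabilityTheory.iIndepFun X μ)
    {g : (ι → ℝ) → ℝ} {L : ℝ} (hL : 0 ≤ L)
    (hg : ∀ x y : ι → ℝ, |g x - g y| ≤ L * ∑ k, |x k - y k|)
    {j : ι} {R c r₀ : ℝ} (hR : 0 ≤ R) (hc : 0 < c)
    (hinfl : ∀ x : ι → ℝ, (∀ k, k ≠ j → |x k| ≤ R) → r₀ ≤ |x j| → c * |x j| ≤ |g x|)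
    {M s : ℝ} (hM : 0 ≤ M) (hs : r₀ ≤ s) :
    (μ {ω | s < |X j ω|}).toReal * ∏ k ∈ univ \ {j}, (μ {ω | |X k ω| ≤ M}).toReal
      ≤ (μ {ω | c * s - L * Fintype.card ι * M < |g (fun k => X k ω)|}).toReal := by
  set B : ι → Set ℝ := fun _ => {y | |y| ≤ M}
  set A : Set ℝ := {y | s < |y|}
  have hprod := hX.measure_iInter_preimage_update (B := B) (A := A)
    (fun _ => measurableSet_le measurable_abs measurable_const)
    (measurableSet_lt measurable_const measurable_abs) j
  calc _ = (μ (⋂ k, X k ⁻¹' Function.update B j A k)).toReal := by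
        rw [hprod, ENNReal.toReal_mul, ENNReal.toReal_prod]; rfl
    _ ≤ _ := by
        refine ENNReal.toReal_mono (measure_ne_top _ _) (measure_mono fun ω hω => ?_)
        have hω' := Set.mem_iInter.1 hω
        refine lt_abs_apply_of_dominant_coord hL hg hR hc hinfl hM hs (by simpa [A] using hω' j)
          fun k hk => by simpa [B, hk] using hω' k

end Probability

theorem tail_dominance_limsup_general
    {Ω : Type*} [MeasureSpace Ω] (μ : Measure Ω) [IsProbabilityMeasure μ]
    (d : ℕ) (X : Fin d → Ω → ℝ)
    (hindep : ProbabilityTheory.iIndepFun X μ)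
    (α : Fin d → ℝ) (hα : ∀ j, 0 < α j)
    (ℓ : Fin d → ℝ → ℝ) (hℓ : ∀ j, SlowlyVarying (ℓ j))
    (htail : ∀ j, ∀ x : ℝ, 0 < x →
      (μ {ω | x < |X j ω|}).toReal = x ^ (-(α j)) * ℓ j x)
    (g : (Fin d → ℝ) → ℝ) (Lg : ℝ) (hLg : 0 < Lg)
    (hgLip : ∀ x y : Fin d → ℝ, |g x - g y| ≤ Lg * ∑ k, |x k - y k|)
    (jstar : Fin d) (R c r₀ : ℝ) (hR : 0 < R) (hc : 0 < c)
    (hinfl : ∀ x : Fin d → ℝ,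
      (∀ k, k ≠ jstar → |x k| ≤ R) → r₀ ≤ |x jstar| → c * |x jstar| ≤ |g x|) :
    limsup (fun t =>
        (-Real.log ((μ {ω | t < |g (fun j => X j ω)|}).toReal)) / Real.log t) atTop
      ≤ α jstar := by
  set p : ℝ → ℝ := fun x => (μ {ω | x < |X jstar ω|}).toReal
  have hp_anti : Antitone p := fun x y hxy =>
    ENNReal.toReal_mono (measure_ne_top _ _) (measure_mono fun ω hω => hxy.trans_lt hω)
  have hp_pos : ∀ᶠ x in atTop, 0 < p x := (eventually_gt_atTop 0).mono fun x hx =>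
    pos_of_antitone_of_slowlyVarying hp_anti (fun _ => ENNReal.toReal_nonneg) (htail jstar)
      (hℓ jstar) hx
  obtain ⟨M, hM_pos, hM⟩ :=
    ((eventually_all.2 fun k => eventually_measure_abs_le_pos (μ := μ) (X k)).and
      (eventually_ge_atTop 0)).exists
  set Q := ∏ k ∈ univ \ {jstar}, (μ {ω | |X k ω| ≤ M}).toReal
  have hQ : 0 < Q := prod_pos fun k _ => ENNReal.toReal_pos (hM_pos k).ne' (measure_ne_top _ _)
  refine limsup_neg_log_div_log_le (Eventually.of_forall fun t => measureReal_le_one) fun β hβ => ?_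
  obtain ⟨K, hK, hKp⟩ := exists_rpow_le_of_doubling hp_anti hp_pos (by linarith [hα jstar])
    (eventually_two_rpow_mul_le hp_pos ((eventually_gt_atTop 0).mono (htail jstar)) (hℓ jstar) hβ)
  refine exists_rpow_le_of_le_comp_affine (mul_pos hK hQ) (by linarith [hα jstar]) hc
    (hKp.mono fun s hs => ?_) ((eventually_ge_atTop r₀).mono fun s hs =>
      tail_mul_prod_le_measure_abs_gt hindep hLg.le hgLip hR.le hc hinfl hM hs)
  rw [mul_right_comm]
  exact mul_le_mul_of_nonneg_right hs hQ.le

/-- tail dominance, lower bound on the tail: if some coordinate `j*` with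
regularly varying tail of index `α_{j*}` influences `g` linearly, then
`limsup (-log P(|g(X)| > t)) / log t ≤ α_{j*}`. -/
theorem tail_dominance_limsup
    {Ω : Type*} [MeasureSpace Ω] (μ : Measure Ω) [IsProbabilityMeasure μ]
    (d : ℕ) (X : Fin d → Ω → ℝ) (hXmeas : ∀ j, Measurable (X j))
    (hindep : ProbabilityTheory.iIndepFun X μ)
    (α : Fin d → ℝ) (hα : ∀ j, 0 < α j)
    (ℓ : Fin d → ℝ → ℝ) (hℓ : ∀ j, SlowlyVarying (ℓ j))
    (htail : ∀ j, ∀ x : ℝ, 0 < x →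
      (μ {ω | x < |X j ω|}).toReal = x ^ (-(α j)) * ℓ j x)
    (g : (Fin d → ℝ) → ℝ) (Lg : ℝ) (hLg : 0 < Lg)
    (hgLip : ∀ x y : Fin d → ℝ, |g x - g y| ≤ Lg * ∑ k, |x k - y k|)
    (jstar : Fin d) (R c r₀ : ℝ) (hR : 0 < R) (hc : 0 < c)
    (hinfl : ∀ x : Fin d → ℝ,
      (∀ k, k ≠ jstar → |x k| ≤ R) → r₀ ≤ |x jstar| → c * |x jstar| ≤ |g x|) :
    limsup (fun t =>
        (-Real.log ((μ {ω | t < |g (fun j => X j ω)|}).toReal)) / Real.log t) atTop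
      ≤ α jstar :=
  tail_dominance_limsup_general μ d X hindep α hα ℓ hℓ htail g Lg hLg hgLip jstar R c r₀ hR hc hinfl
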